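/- arXiv:2412.07805 — 2 statements merged into one kernel-verified Lean document; each statement's English description precedes it below -/
import Mathlib

section
/- Let (K_i)_{i∈{0,...,m}} be a simplex-wise filtration of simplicial complexes, and suppose K_i = K_{i-1} ∪ {σ_i} where σ_i is a q-simplex. Then exactly one of the following occurs: σ_i kills a homology class of degree q-1, or σ_i gives birth to a homology class of degree q. -/
set_option maxSynthPendingDepth 2

/-! Simplicial ℤ/2 chains and homology machinery. -/

/-- Chains with `ℤ/2` coefficients, formal sums of finite subsets of `V`. -/
abbrev Ch (V : Type*) := Finset V →₀ ZMod 2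

/-- The simplicial boundary operator: a simplex with at least two vertices is sent
to the sum of its codimension-1 faces; vertices are sent to `0`. -/
noncomputable def bdry (V : Type*) [DecidableEq V] : Ch V →ₗ[ZMod 2] Ch V :=
  Finsupp.linearCombination (ZMod 2) fun σ : Finset V =>
    if σ.card ≤ 1 then 0 else ∑ v ∈ σ, Finsupp.single (σ.erase v) (1 : ZMod 2)

/-- A simplicial complex: a collection of nonempty finite subsets of `V`
closed under taking nonempty subsets. -/
def IsComplex {V : Type*} (K : Set (Finset V)) : Prop :=
  ∀ σ ∈ K, σ.Nonempty ∧ ∀ τ ⊆ σ, τ.Nonempty → τ ∈ K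

/-- The space of chains supported on simplices of `K` with `k` vertices
(i.e. the simplicial chain group of degree `k - 1`). -/
noncomputable def chainCard {V : Type*} [DecidableEq V] (K : Set (Finset V)) (k : ℕ) :
    Submodule (ZMod 2) (Ch V) :=
  Submodule.span (ZMod 2) {f | ∃ σ ∈ K, σ.card = k ∧ f = Finsupp.single σ 1}

theorem chainCard_mono {V : Type*} [DecidableEq V] {K₁ K₂ : Set (Finset V)}
    (h : K₁ ⊆ K₂) (k : ℕ) : chainCard K₁ k ≤ chainCard K₂ k := by
  apply Submodule.span_mono
  rintro f ⟨σ, hσ, hc, rfl⟩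
  exact ⟨σ, h hσ, hc, rfl⟩

/-- Cycles (in cardinality grading `k`, i.e. degree `k-1`) of a chain subcomplex `W`. -/
noncomputable def cyclesOf {V : Type*} [DecidableEq V] (W : ℕ → Submodule (ZMod 2) (Ch V)) (k : ℕ) :
    Submodule (ZMod 2) (Ch V) :=
  W k ⊓ LinearMap.ker (bdry V)

/-- Boundaries (in cardinality grading `k`, i.e. degree `k-1`) of a chain subcomplex `W`. -/
noncomputable def bdriesOf {V : Type*} [DecidableEq V] (W : ℕ → Submodule (ZMod 2) (Ch V)) (k : ℕ) :
    Submodule (ZMod 2) (Ch V) :=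
  Submodule.map (bdry V) (W (k + 1))

/-- Homology of the chain complex `W` in cardinality grading `k` (degree `k - 1`):
cycles modulo boundaries. -/
abbrev homolOf {V : Type*} [DecidableEq V] (W : ℕ → Submodule (ZMod 2) (Ch V)) (k : ℕ) :=
  ↥(cyclesOf W k) ⧸ (bdriesOf W k).comap (cyclesOf W k).subtype

/-- The map on homology induced by a degreewise inclusion of chain complexes. -/
noncomputable def homolMap {V : Type*} [DecidableEq V]
    (W W' : ℕ → Submodule (ZMod 2) (Ch V)) (h : ∀ k, W k ≤ W' k) (k : ℕ) :
    homolOf W k →ₗ[ZMod 2] homolOf W' k :=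
  Submodule.mapQ _ _ (Submodule.inclusion (inf_le_inf (h k) le_rfl))
    (by
      intro x hx
      simp only [Submodule.mem_comap, Submodule.subtype_apply, Submodule.coe_inclusion]
        at hx ⊢
      exact Submodule.map_mono (h (k + 1)) hx)

/-! Persistence: birth and death in a simplex-wise filtration. -/

/-- The class `γ ∈ H_{k-1}(K j)` is born at index `j`: for every `j' < j`
no class of `H_{k-1}(K j')` is mapped to `γ` by the map induced by inclusion. -/
def BornAt {V : Type*} [DecidableEq V] (K : ℕ → Set (Finset V)) (k j : ℕ)
    (γ : homolOf (chainCard (K j)) k) : Prop :=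
  ∀ j' < j, ∀ (h : K j' ⊆ K j), ∀ β : homolOf (chainCard (K j')) k,
    homolMap (chainCard (K j')) (chainCard (K j)) (fun n => chainCard_mono h n) k β ≠ γ

/-- At index `d`, the image of the class `γ ∈ H_{k-1}(K j)` agrees with the image of
a class present strictly before index `j`. -/
def MergesAt {V : Type*} [DecidableEq V] (K : ℕ → Set (Finset V)) (k j : ℕ)
    (γ : homolOf (chainCard (K j)) k) (d : ℕ) : Prop :=
  ∃ j' < j, ∃ β : homolOf (chainCard (K j')) k,
    ∀ (h : K j ⊆ K d) (h' : K j' ⊆ K d),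
      homolMap (chainCard (K j)) (chainCard (K d)) (fun n => chainCard_mono h n) k γ =
      homolMap (chainCard (K j')) (chainCard (K d)) (fun n => chainCard_mono h' n) k β

/-- The class `γ ∈ H_{k-1}(K j)`, born at `j`, dies at index `d`: `d` is the smallest
index at which the image of `γ` coincides with the image of a class from an index
strictly before `j`. -/
def DiesAt {V : Type*} [DecidableEq V] (K : ℕ → Set (Finset V)) (k j : ℕ)
    (γ : homolOf (chainCard (K j)) k) (d : ℕ) : Prop :=
  j ≤ d ∧ MergesAt K k j γ d ∧ ∀ d', j ≤ d' → d' < d → ¬ MergesAt K k j γ d'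

/-- The simplex added at index `i` gives birth to a homology class of degree `k - 1`. -/
def GivesBirth {V : Type*} [DecidableEq V] (K : ℕ → Set (Finset V)) (k i : ℕ) : Prop :=
  ∃ γ : homolOf (chainCard (K i)) k, BornAt K k i γ

/-- The simplex added at index `i` kills a homology class of degree `k - 1`. -/
def Kills {V : Type*} [DecidableEq V] (K : ℕ → Set (Finset V)) (k i : ℕ) : Prop :=
  ∃ j, ∃ γ : homolOf (chainCard (K j)) k, BornAt K k j γ ∧ DiesAt K k j γ i

/-! When a `q`-simplex `σ` is added to a complex `L`, its boundary `∂σ` is a `(q-1)`-cycle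
of `L`. If `∂σ = ∂c` already bounds in `L`, then `σ - c` is a new `q`-cycle that is not homologous to
anything in `L`, and the boundaries of degree `q - 1` do not change, so `H_{q-1}` injects: `σ`
gives birth and kills nothing. Otherwise `[∂σ] ≠ 0` in `H_{q-1}(L)` becomes zero, while no
`q`-cycle can involve `σ`, so `H_q` is onto: `σ` kills and gives birth to nothing. -/

section Boundary

variable {V : Type*} [DecidableEq V]

lemma bdry_single (τ : Finset V) :
    bdry V (Finsupp.single τ 1) =
      if τ.card ≤ 1 then 0 else ∑ v ∈ τ, Finsupp.single (τ.erase v) (1 : ZMod 2) := by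
  simp [bdry, Finsupp.linearCombination_single]

lemma bdry_bdry_single (τ : Finset V) : bdry V (bdry V (Finsupp.single τ 1)) = 0 := by
  rw [bdry_single]
  split_ifs with h1
  · exact map_zero _
  rw [map_sum]
  by_cases h2 : τ.card ≤ 2
  · refine Finset.sum_eq_zero fun v hv => ?_
    rw [bdry_single, if_pos (by rw [Finset.card_erase_of_mem hv]; omega)]
  have hface : ∀ v ∈ τ, bdry V (Finsupp.single (τ.erase v) 1) =
      ∑ w ∈ τ.erase v, Finsupp.single ((τ.erase v).erase w) (1 : ZMod 2) := fun v hv => by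
    rw [bdry_single, if_neg (by rw [Finset.card_erase_of_mem hv]; omega)]
  rw [Finset.sum_congr rfl hface, Finset.sum_sigma']
  -- the faces obtained by erasing `v` then `w`, and `w` then `v`, cancel mod 2
  refine Finset.sum_involution (fun p _ => ⟨p.2, p.1⟩) ?_ ?_ ?_ fun _ _ => rfl
  · rintro ⟨v, w⟩ _
    rw [Finset.erase_right_comm, ← Finsupp.single_add, show (1 + 1 : ZMod 2) = 0 from rfl,
      Finsupp.single_zero]
  · rintro ⟨v, w⟩ hp _ heq
    simp only [Finset.mem_sigma, Finset.mem_erase] at hp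
    exact hp.2.1 (congrArg Sigma.fst heq)
  · rintro ⟨v, w⟩ hp
    simp only [Finset.mem_sigma, Finset.mem_erase] at hp ⊢
    exact ⟨hp.2.2, Ne.symm hp.2.1, hp.1⟩

end Boundary

section Chains

variable {V : Type*} [DecidableEq V] {K : Set (Finset V)} {σ : Finset V} {k : ℕ}

lemma single_mem_chainCard (hσ : σ ∈ K) (hk : σ.card = k) :
    Finsupp.single σ 1 ∈ chainCard K k :=
  Submodule.subset_span ⟨σ, hσ, hk, rfl⟩

lemma chainCard_le_supported (K : Set (Finset V)) (k : ℕ) :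
    chainCard K k ≤ Finsupp.supported (ZMod 2) (ZMod 2) K := by
  rw [chainCard, Submodule.span_le]
  rintro _ ⟨τ, hτ, -, rfl⟩
  exact Finsupp.single_mem_supported (ZMod 2) 1 hτ

lemma mem_of_single_mem_chainCard (h : Finsupp.single σ 1 ∈ chainCard K k) : σ ∈ K :=
  chainCard_le_supported K k h (by simp)

lemma chainCard_empty (k : ℕ) : chainCard (∅ : Set (Finset V)) k = ⊥ := by
  simp [chainCard]

lemma bdriesOf_chainCard_le (hK : IsComplex K) (k : ℕ) :
    bdriesOf (chainCard K) k ≤ chainCard K k := by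
  rw [bdriesOf, chainCard, Submodule.map_span, Submodule.span_le]
  rintro _ ⟨_, ⟨τ, hτ, hc, rfl⟩, rfl⟩
  rw [SetLike.mem_coe, bdry_single]
  split_ifs with h
  · exact zero_mem _
  refine sum_mem fun v hv => single_mem_chainCard ?_ ?_
  · refine (hK τ hτ).2 _ (Finset.erase_subset _ _) ?_
    rw [← Finset.card_pos, Finset.card_erase_of_mem hv]
    omega
  · rw [Finset.card_erase_of_mem hv, hc]
    omega

lemma chainCard_union_singleton_of_card_ne (h : σ.card ≠ k) :
    chainCard (K ∪ {σ}) k = chainCard K k := by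
  refine le_antisymm ?_ (chainCard_mono Set.subset_union_left k)
  rw [chainCard, Submodule.span_le]
  rintro _ ⟨τ, hτ | rfl, hc, rfl⟩
  · exact single_mem_chainCard hτ hc
  · exact absurd hc h

lemma chainCard_union_singleton (h : σ.card = k) :
    chainCard (K ∪ {σ}) k = chainCard K k ⊔ Submodule.span (ZMod 2) {Finsupp.single σ 1} := by
  refine le_antisymm ?_ (sup_le (chainCard_mono Set.subset_union_left k) ?_)
  · rw [chainCard, Submodule.span_le]
    rintro _ ⟨τ, hτ | rfl, hc, rfl⟩
    · exact Submodule.mem_sup_left (single_mem_chainCard hτ hc)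
    · exact Submodule.mem_sup_right (Submodule.subset_span rfl)
  · rw [Submodule.span_singleton_le_iff_mem]
    exact single_mem_chainCard (Or.inr rfl) h

lemma bdriesOf_chainCard_union_singleton (h : σ.card = k + 1) :
    bdriesOf (chainCard (K ∪ {σ})) k =
      bdriesOf (chainCard K) k ⊔ Submodule.span (ZMod 2) {bdry V (Finsupp.single σ 1)} := by
  rw [bdriesOf, bdriesOf, chainCard_union_singleton h, Submodule.map_sup, Submodule.map_span,
    Set.image_singleton]

end Chains

section Homology

variable {V : Type*} [DecidableEq V] {W W' W'' : ℕ → Submodule (ZMod 2) (Ch V)} {k : ℕ}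

lemma cyclesOf_mono (h : ∀ k, W k ≤ W' k) (k : ℕ) : cyclesOf W k ≤ cyclesOf W' k :=
  inf_le_inf (h k) le_rfl

lemma homolMap_mk (h : ∀ k, W k ≤ W' k) {x : Ch V} (hx : x ∈ cyclesOf W k) :
    homolMap W W' h k (Submodule.Quotient.mk ⟨x, hx⟩) =
      Submodule.Quotient.mk ⟨x, cyclesOf_mono h k hx⟩ :=
  rfl

lemma homolOf_mk_eq_mk_iff {x y : Ch V} (hx : x ∈ cyclesOf W k) (hy : y ∈ cyclesOf W k) :
    (Submodule.Quotient.mk ⟨x, hx⟩ : homolOf W k) = Submodule.Quotient.mk ⟨y, hy⟩ ↔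
      x - y ∈ bdriesOf W k := by
  simp [Submodule.Quotient.eq]

lemma homolOf_mk_eq_zero_iff {x : Ch V} (hx : x ∈ cyclesOf W k) :
    (Submodule.Quotient.mk ⟨x, hx⟩ : homolOf W k) = 0 ↔ x ∈ bdriesOf W k := by
  simp [Submodule.Quotient.mk_eq_zero]

lemma homolOf_eq_zero_of_eq_bot (hW : W k = ⊥) (γ : homolOf W k) : γ = 0 := by
  obtain ⟨⟨x, hx⟩, rfl⟩ := Submodule.Quotient.mk_surjective _ γ
  have hx0 : x = 0 := by simpa [hW] using hx.1
  subst hx0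
  exact (homolOf_mk_eq_zero_iff hx).2 (zero_mem _)

lemma homolMap_self_apply (h : ∀ k, W k ≤ W k) (γ : homolOf W k) : homolMap W W h k γ = γ := by
  obtain ⟨⟨x, hx⟩, rfl⟩ := Submodule.Quotient.mk_surjective _ γ
  rfl

lemma homolMap_homolMap (h : ∀ k, W k ≤ W' k) (h' : ∀ k, W' k ≤ W'' k) (γ : homolOf W k) :
    homolMap W' W'' h' k (homolMap W W' h k γ) =
      homolMap W W'' (fun n => (h n).trans (h' n)) k γ := by
  obtain ⟨⟨x, hx⟩, rfl⟩ := Submodule.Quotient.mk_surjective _ γ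
  rfl

lemma homolMap_injective_of_bdriesOf_le (h : ∀ k, W k ≤ W' k)
    (hB : bdriesOf W' k ≤ bdriesOf W k) : Function.Injective (homolMap W W' h k) := by
  refine (injective_iff_map_eq_zero _).2 fun γ hγ => ?_
  obtain ⟨⟨x, hx⟩, rfl⟩ := Submodule.Quotient.mk_surjective _ γ
  rw [homolMap_mk, homolOf_mk_eq_zero_iff] at hγ
  exact (homolOf_mk_eq_zero_iff hx).2 (hB hγ)

lemma homolMap_surjective_of_cyclesOf_le (h : ∀ k, W k ≤ W' k)
    (hZ : cyclesOf W' k ≤ cyclesOf W k) : Function.Surjective (homolMap W W' h k) := by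
  intro γ
  obtain ⟨⟨x, hx⟩, rfl⟩ := Submodule.Quotient.mk_surjective _ γ
  exact ⟨Submodule.Quotient.mk ⟨x, hZ hx⟩, rfl⟩

end Homology

section Step

variable {V : Type*} [DecidableEq V] {L L' : Set (Finset V)} {σ : Finset V} {q : ℕ}

lemma bdry_single_mem_cyclesOf (hL' : IsComplex L') (hσ : L' = L ∪ {σ}) (hq : σ.card = q + 1) :
    bdry V (Finsupp.single σ 1) ∈ cyclesOf (chainCard L) q := by
  subst hσ
  refine ⟨?_, bdry_bdry_single σ⟩
  rw [← chainCard_union_singleton_of_card_ne (K := L) (by omega : σ.card ≠ q)]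
  exact bdriesOf_chainCard_le hL' q ⟨_, single_mem_chainCard (Or.inr rfl) hq, rfl⟩

lemma homolMap_mk_bdry_single_eq_zero (hσ : L' = L ∪ {σ}) (hq : σ.card = q + 1)
    (hcyc : bdry V (Finsupp.single σ 1) ∈ cyclesOf (chainCard L) q)
    (h : ∀ k, chainCard L k ≤ chainCard L' k) :
    homolMap (chainCard L) (chainCard L') h q (Submodule.Quotient.mk ⟨_, hcyc⟩) = 0 := by
  subst hσ
  rw [homolMap_mk, homolOf_mk_eq_zero_iff]
  exact ⟨_, single_mem_chainCard (Or.inr rfl) hq, rfl⟩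

lemma homolMap_injective_of_bdry_mem (hσ : L' = L ∪ {σ}) (hq : σ.card = q + 1)
    (hb : bdry V (Finsupp.single σ 1) ∈ bdriesOf (chainCard L) q)
    (h : ∀ k, chainCard L k ≤ chainCard L' k) :
    Function.Injective (homolMap (chainCard L) (chainCard L') h q) := by
  subst hσ
  refine homolMap_injective_of_bdriesOf_le h ?_
  rw [bdriesOf_chainCard_union_singleton hq]
  exact sup_le le_rfl ((Submodule.span_singleton_le_iff_mem _ _).2 hb)

lemma exists_not_mem_range_homolMap_of_bdry_mem (hL : IsComplex L) (hσL : σ ∉ L)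
    (hσ : L' = L ∪ {σ}) (hq : σ.card = q + 1)
    (hb : bdry V (Finsupp.single σ 1) ∈ bdriesOf (chainCard L) q)
    (h : ∀ k, chainCard L k ≤ chainCard L' k) :
    ∃ γ, γ ∉ Set.range (homolMap (chainCard L) (chainCard L') h (q + 1)) := by
  subst hσ
  obtain ⟨c, hc, hcσ⟩ := hb
  have hz : Finsupp.single σ 1 - c ∈ cyclesOf (chainCard (L ∪ {σ})) (q + 1) :=
    Submodule.mem_inf.2 ⟨sub_mem (single_mem_chainCard (Or.inr rfl) hq) (h _ hc),
      by rw [LinearMap.mem_ker, map_sub, hcσ, sub_self]⟩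
  refine ⟨Submodule.Quotient.mk ⟨_, hz⟩, ?_⟩
  rintro ⟨β, hβ⟩
  obtain ⟨⟨w, hw⟩, rfl⟩ := Submodule.Quotient.mk_surjective _ β
  rw [homolMap_mk, homolOf_mk_eq_mk_iff] at hβ
  -- the `(q+1)`-simplices of `L ∪ {σ}` lie in the complex `L`, hence so do their boundaries
  have hB : bdriesOf (chainCard (L ∪ {σ})) (q + 1) ≤ chainCard L (q + 1) := by
    rw [bdriesOf, chainCard_union_singleton_of_card_ne (by omega)]
    exact bdriesOf_chainCard_le hL (q + 1)
  refine hσL (mem_of_single_mem_chainCard (k := q + 1) ?_)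
  rw [show Finsupp.single σ 1 = w - (w - (Finsupp.single σ 1 - c)) + c by abel]
  exact add_mem (sub_mem hw.1 (hB hβ)) hc

lemma homolMap_surjective_of_bdry_not_mem (hσ : L' = L ∪ {σ}) (hq : σ.card = q + 1)
    (hb : bdry V (Finsupp.single σ 1) ∉ bdriesOf (chainCard L) q)
    (h : ∀ k, chainCard L k ≤ chainCard L' k) :
    Function.Surjective (homolMap (chainCard L) (chainCard L') h (q + 1)) := by
  subst hσ
  refine homolMap_surjective_of_cyclesOf_le h ?_
  intro z hz
  obtain ⟨hzC, hz⟩ := Submodule.mem_inf.1 hz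
  rw [chainCard_union_singleton hq, Submodule.mem_sup] at hzC
  obtain ⟨c, hc, _, hs, rfl⟩ := hzC
  obtain ⟨a, rfl⟩ := Submodule.mem_span_singleton.1 hs
  obtain rfl : a = 0 := by
    by_contra ha
    refine hb ((Submodule.smul_mem_iff _ ha).1 ⟨-c, neg_mem hc, ?_⟩)
    rw [LinearMap.mem_ker, map_add] at hz
    rw [map_neg, ← map_smul, eq_neg_of_add_eq_zero_right hz]
  rw [zero_smul, add_zero] at hz ⊢
  exact Submodule.mem_inf.2 ⟨hc, hz⟩

end Step

section Filtration

variable {V : Type*} {K : ℕ → Set (Finset V)}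

lemma monotoneOn_Iic_of_subset_succ {m : ℕ} (h : ∀ j, j + 1 ≤ m → K j ⊆ K (j + 1)) :
    MonotoneOn K (Set.Iic m) :=
  monotoneOn_of_le_succ Set.ordConnected_Iic fun j _ _ hj => h j hj

variable [DecidableEq V] {k p : ℕ}

lemma bornAt_of_not_mem_range (hmono : MonotoneOn K (Set.Iic (p + 1))) (hsub : K p ⊆ K (p + 1))
    {γ : homolOf (chainCard (K (p + 1))) k}
    (hγ : γ ∉ Set.range
      (homolMap (chainCard (K p)) (chainCard (K (p + 1))) (fun n => chainCard_mono hsub n) k)) :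
    BornAt K k (p + 1) γ := by
  intro j hj _ β hβ
  have hjp : K j ⊆ K p :=
    hmono (Set.mem_Iic.2 (by omega)) (Set.mem_Iic.2 (by omega)) (by omega)
  exact hγ ⟨_, (homolMap_homolMap (fun n => chainCard_mono hjp n) _ β).trans hβ⟩

lemma not_givesBirth_of_surjective (hsub : K p ⊆ K (p + 1))
    (hs : Function.Surjective
      (homolMap (chainCard (K p)) (chainCard (K (p + 1))) (fun n => chainCard_mono hsub n) k)) :
    ¬ GivesBirth K k (p + 1) := by
  rintro ⟨γ, hγ⟩
  obtain ⟨β, hβ⟩ := hs γ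
  exact hγ p p.lt_succ_self hsub β hβ

lemma not_kills_of_injective (hmono : MonotoneOn K (Set.Iic (p + 1))) (hsub : K p ⊆ K (p + 1))
    (hinj : Function.Injective
      (homolMap (chainCard (K p)) (chainCard (K (p + 1))) (fun n => chainCard_mono hsub n) k)) :
    ¬ Kills K k (p + 1) := by
  rintro ⟨j, γ, hborn, hjp, ⟨j', hj', β, hmerge⟩, hmin⟩
  have hle : ∀ {a b}, a ≤ b → b ≤ p + 1 → K a ⊆ K b := fun hab hb =>
    hmono (Set.mem_Iic.2 (hab.trans hb)) (Set.mem_Iic.2 hb) hab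
  rcases hjp.eq_or_lt with rfl | hjp
  · refine hborn j' hj' (hle hj'.le le_rfl) β ?_
    rw [← hmerge subset_rfl (hle hj'.le le_rfl), homolMap_self_apply]
  · refine hmin p (by omega) (by omega) ⟨j', hj', β, fun h h' => hinj ?_⟩
    rw [homolMap_homolMap, homolMap_homolMap]
    exact hmerge (hle hjp.le le_rfl) (hle (by omega) le_rfl)

lemma kills_of_homolMap_eq_zero (hK0 : K 0 = ∅) (hmono : MonotoneOn K (Set.Iic (p + 1)))
    (hsub : K p ⊆ K (p + 1)) (D : homolOf (chainCard (K p)) k) (hD : D ≠ 0)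
    (hD0 : homolMap _ _ (fun n => chainCard_mono hsub n) k D = 0) :
    Kills K k (p + 1) := by
  classical
  have hle : ∀ {a b}, a ≤ b → b ≤ p + 1 → K a ⊆ K b := fun hab hb =>
    hmono (Set.mem_Iic.2 (hab.trans hb)) (Set.mem_Iic.2 hb) hab
  -- the killed class is born at the first index from which `D` is represented
  let P : ℕ → Prop := fun j => j ≤ p ∧ ∃ β : homolOf (chainCard (K j)) k,
    ∀ h : K j ⊆ K p, homolMap _ _ (fun n => chainCard_mono h n) k β = D
  have hP : ∃ j, P j := ⟨p, le_rfl, D, fun _ => homolMap_self_apply _ D⟩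
  set j₀ := Nat.find hP
  obtain ⟨hj₀p, β, hβ⟩ : P j₀ := Nat.find_spec hP
  have hmin : ∀ j < j₀, ∀ d, j₀ ≤ d → d ≤ p → ∀ (β' : homolOf (chainCard (K j)) k)
      (h : K j ⊆ K d) (h' : K j₀ ⊆ K d), homolMap _ _ (fun n => chainCard_mono h n) k β' ≠
        homolMap _ _ (fun n => chainCard_mono h' n) k β := by
    intro j hj d hj₀d hdp β' h h' heq
    have hdp' : K d ⊆ K p := hle hdp (by omega)
    refine Nat.find_min hP hj ⟨by omega, β', fun _ => ?_⟩
    rw [← hβ (h'.trans hdp'),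
      ← homolMap_homolMap (fun n => chainCard_mono h' n) (fun n => chainCard_mono hdp' n), ← heq,
      homolMap_homolMap]
  have hj₀ : j₀ ≠ 0 := by
    intro hj₀
    refine hD ?_
    rw [← hβ (hle hj₀p (by omega)), homolOf_eq_zero_of_eq_bot (by rw [hj₀, hK0, chainCard_empty]) β,
      map_zero]
  refine ⟨j₀, β, fun j hj h β' heq => ?_, by omega, ⟨0, by omega, 0, fun _ _ => ?_⟩, ?_⟩
  · exact hmin j hj j₀ le_rfl hj₀p β' h subset_rfl (by rw [heq, homolMap_self_apply])
  · rw [map_zero, ← hD0, ← hβ (hle hj₀p (by omega)), homolMap_homolMap]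
  · rintro d hj₀d hdp ⟨j, hj, β', heq⟩
    have hjd : K j ⊆ K d := hle (by omega) (by omega)
    have hj₀d' : K j₀ ⊆ K d := hle hj₀d (by omega)
    exact hmin j hj d hj₀d (by omega) β' hjd hj₀d' (heq hj₀d' hjd).symm

end Filtration

theorem kills_xor_givesBirth_general {V : Type*} [DecidableEq V]
    (m : ℕ) (K : ℕ → Set (Finset V)) (σs : ℕ → Finset V)
    (hK0 : K 0 = ∅)
    (hcx : ∀ i ≤ m, IsComplex (K i))
    (hstep : ∀ i, 1 ≤ i → i ≤ m → σs i ∉ K (i - 1) ∧ K i = K (i - 1) ∪ {σs i})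
    (q i : ℕ) (hi1 : 1 ≤ i) (him : i ≤ m) (hq : (σs i).card = q + 1) :
    Xor' (Kills K q i) (GivesBirth K (q + 1) i) := by
  have hsucc : ∀ j, j + 1 ≤ m → K j ⊆ K (j + 1) := fun j hj => by
    rw [(hstep (j + 1) (by omega) hj).2, Nat.add_sub_cancel]
    exact Set.subset_union_left
  obtain ⟨p, rfl⟩ : ∃ p, i = p + 1 := ⟨i - 1, by omega⟩
  obtain ⟨hσ, hK⟩ : σs (p + 1) ∉ K p ∧ K (p + 1) = K p ∪ {σs (p + 1)} := hstep (p + 1) hi1 him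
  have hmono := (monotoneOn_Iic_of_subset_succ hsucc).mono (Set.Iic_subset_Iic.2 him)
  have hsub := hsucc p him
  have hcyc := bdry_single_mem_cyclesOf (hcx _ him) hK hq
  by_cases hb : bdry V (Finsupp.single (σs (p + 1)) 1) ∈ bdriesOf (chainCard (K p)) q
  · obtain ⟨γ, hγ⟩ := exists_not_mem_range_homolMap_of_bdry_mem (hcx p (by omega)) hσ hK hq hb
      (fun n => chainCard_mono hsub n)
    exact Or.inr ⟨⟨γ, bornAt_of_not_mem_range hmono hsub hγ⟩,
      not_kills_of_injective hmono hsub (homolMap_injective_of_bdry_mem hK hq hb _)⟩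
  · exact Or.inl ⟨kills_of_homolMap_eq_zero hK0 hmono hsub _
      ((homolOf_mk_eq_zero_iff hcyc).not.2 hb) (homolMap_mk_bdry_single_eq_zero hK hq hcyc _),
      not_givesBirth_of_surjective hsub (homolMap_surjective_of_bdry_not_mem hK hq hb _)⟩

/-- In a simplex-wise filtration, the `q`-simplex `σ i` added at step `i`
either kills a degree-`(q-1)` homology class or gives birth to a degree-`q` homology
class, and exactly one of these occurs. -/
theorem kills_xor_givesBirth {V : Type*} [Fintype V] [DecidableEq V]
    (m : ℕ) (K : ℕ → Set (Finset V)) (σs : ℕ → Finset V)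
    (hK0 : K 0 = ∅)
    (hcx : ∀ i ≤ m, IsComplex (K i))
    (hstep : ∀ i, 1 ≤ i → i ≤ m → σs i ∉ K (i - 1) ∧ K i = K (i - 1) ∪ {σs i})
    (q i : ℕ) (hi1 : 1 ≤ i) (him : i ≤ m) (hq : (σs i).card = q + 1) :
    Xor' (Kills K q i) (GivesBirth K (q + 1) i) :=
  kills_xor_givesBirth_general m K σs hK0 hcx hstep q i hi1 him hq
end

section
/- Let K be a finite simplicial complex with an acyclic partial matching μ : M → M. Then the chain complex Match_*(K, μ) is acyclic, i.e., its homology vanishes in every degree q ≥ 0. -/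
set_option maxSynthPendingDepth 2

/-! Discrete Morse theory: partial matchings, acyclicity, the closure map. -/

/-- `Covers σ τ`: `σ` covers `τ` in the face poset, i.e. `τ ⊆ σ` in codimension one. -/
def Covers {V : Type*} (σ τ : Finset V) : Prop :=
  τ ⊆ σ ∧ σ.card = τ.card + 1

/-- A partial matching: an involution `μ` on a set `M` of simplices matching each
simplex with a simplex that covers it or that it covers. -/
structure PartialMatching (V : Type*) where
  M : Set (Finset V)
  μ : Finset V → Finset V
  mem_M : ∀ σ ∈ M, μ σ ∈ M
  invol : ∀ σ ∈ M, μ (μ σ) = σ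
  matched : ∀ σ ∈ M, Covers (μ σ) σ ∨ Covers σ (μ σ)

/-- Acyclicity of a partial matching: there is no cyclic sequence
`σ₁ ≻ μ(σ₁) ≺ σ₂ ≻ μ(σ₂) ≺ ⋯ ≺ σ_l ≻ μ(σ_l) ≺ σ₁` with `l ≥ 2` and the `σᵢ` distinct. -/
def PartialMatching.Acyclic {V : Type*} (m : PartialMatching V) : Prop :=
  ¬ ∃ (l : ℕ) (f : ℕ → Finset V), 2 ≤ l ∧
      (∀ i < l, ∀ j < l, f i = f j → i = j) ∧
      (∀ i < l, f i ∈ m.M ∧ Covers (f i) (m.μ (f i))) ∧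
      (∀ i < l, Covers (f ((i + 1) % l)) (m.μ (f i)))

/-- `M^↑`: matched simplices lying above their partner. -/
def Mup {V : Type*} (m : PartialMatching V) : Set (Finset V) :=
  {σ | σ ∈ m.M ∧ Covers σ (m.μ σ)}

/-- `M_q^↑` in cardinality grading: elements of `M^↑` with `k` vertices (degree `k-1`). -/
def MupCard {V : Type*} (m : PartialMatching V) (k : ℕ) : Set (Finset V) :=
  {σ | σ ∈ Mup m ∧ σ.card = k}

/-- `R_q(μ)` in cardinality grading: the unmatched (critical) simplices of `K`
with `k` vertices (degree `k-1`). -/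
def Rcard {V : Type*} (K : Set (Finset V)) (m : PartialMatching V) (k : ℕ) :
    Set (Finset V) :=
  {σ | σ ∈ K ∧ σ.card = k ∧ σ ∉ m.M}

/-- `(α, β)` is an edge of the graph `G(μ)`: `μ β` is defined, `β` lies above its
partner, and `α` covers `μ β` (with `β ≠ α`). -/
def IsEdge {V : Type*} (m : PartialMatching V) (α β : Finset V) : Prop :=
  β ≠ α ∧ β ∈ m.M ∧ Covers β (m.μ β) ∧ Covers α (m.μ β)

open scoped Classical in
/-- `φ` is the closure map of the matching `m` on `K`: it satisfies the defining
recursion `φ α = α + ∑ φ β` over the edges `(α, β)` emanating from `α` in `G(μ)`. -/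
def IsClosure {V : Type*} [Fintype V] [DecidableEq V] (K : Set (Finset V))
    (m : PartialMatching V) (φ : Finset V → Ch V) : Prop :=
  ∀ α ∈ K, φ α = Finsupp.single α 1 + ∑ β : Finset V, if IsEdge m α β then φ β else 0

/-- The degree-`(k-1)` chain group of the Morse (critical) complex of `C`:
the span of the closures of the unmatched simplices of `C` with `k` vertices. -/
noncomputable def critWOn {V : Type*} [DecidableEq V] (C : Set (Finset V))
    (m : PartialMatching V) (φ : Finset V → Ch V) (k : ℕ) :
    Submodule (ZMod 2) (Ch V) :=
  Submodule.span (ZMod 2) {f | ∃ γ, γ ∈ C ∧ γ.card = k ∧ γ ∉ m.M ∧ f = φ γ}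

theorem critWOn_mono {V : Type*} [DecidableEq V] {C₁ C₂ : Set (Finset V)}
    (h : C₁ ⊆ C₂) (m : PartialMatching V) (φ : Finset V → Ch V) (k : ℕ) :
    critWOn C₁ m φ k ≤ critWOn C₂ m φ k := by
  apply Submodule.span_mono
  rintro f ⟨γ, hγ, hc, hm, rfl⟩
  exact ⟨γ, h hγ, hc, hm, rfl⟩

/-- The degree-`(k-1)` chain group of the complex `Match`, spanned by `M_{k-1}^↑`
together with the boundaries of the elements of `M_k^↑`. -/
noncomputable def matchW {V : Type*} [DecidableEq V] (m : PartialMatching V) (k : ℕ) :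
    Submodule (ZMod 2) (Ch V) :=
  Submodule.span (ZMod 2)
    ({f | ∃ σ ∈ MupCard m k, f = Finsupp.single σ 1} ∪
      {f | ∃ β ∈ MupCard m (k + 1), f = bdry V (Finsupp.single β 1)})

/-- The set `B_q^R ∪ B_q^↑ ∪ B_q^↓` (in cardinality grading `k = q + 1`). -/
noncomputable def morseBasis {V : Type*} [DecidableEq V] (K : Set (Finset V))
    (m : PartialMatching V) (φ : Finset V → Ch V) (k : ℕ) : Set (Ch V) :=
  {f | ∃ γ ∈ Rcard K m k, f = φ γ} ∪
    ({f | ∃ σ ∈ MupCard m k, f = Finsupp.single σ 1} ∪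
      {f | ∃ β ∈ MupCard m (k + 1), f = bdry V (Finsupp.single β 1)})

/-! A cycle `z` of `Match` in degree `q` has the form `u + ∂w` with `u` supported on `M_q^↑`
and `w` on `M_{q+1}^↑`, so `∂u = 0`. Over `ℤ/2` this forces `u = 0`: for every `σ` in the
support of `u`, the coefficient of `μ(σ)` in `∂u` counts the simplices of the support covering
`μ(σ)`, so some `σ' ≠ σ` in the support covers `μ(σ)`; iterating `σ ↦ σ'` inside the finite
support eventually closes up, giving a cycle that acyclicity forbids. Hence `z = ∂w` is a
boundary in `Match`. -/

section Periodic

variable {α : Type*} {f : α → α} {s : Set α}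

open Function in
theorem Set.Finite.exists_mem_periodicPts (hs : s.Finite) (hf : Set.MapsTo f s s)
    (hne : s.Nonempty) : ∃ x ∈ s, x ∈ periodicPts f := by
  obtain ⟨x₀, hx₀⟩ := hne
  obtain ⟨a, b, hab, heq⟩ := hs.exists_lt_map_eq_of_forall_mem fun n => hf.iterate n hx₀
  refine ⟨f^[a] x₀, hf.iterate a hx₀, b - a, by omega, ?_⟩
  rw [IsPeriodicPt, IsFixedPt, ← iterate_add_apply, Nat.sub_add_cancel hab.le, heq]

end Periodic

theorem sum_sum_erase_eq_zero_of_symm {ι M : Type*} [DecidableEq ι] [AddCommGroup M]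
    [Module (ZMod 2) M] (s : Finset ι) (f : ι → ι → M) (hf : ∀ a b, f a b = f b a) :
    ∑ a ∈ s, ∑ b ∈ s.erase a, f a b = 0 := by
  rw [Finset.sum_sigma']
  refine Finset.sum_involution (fun p _ => ⟨p.2, p.1⟩) (fun p _ => ?_) (fun p hp _ h => ?_)
    (fun p hp => ?_) (fun _ _ => rfl)
  · rw [hf, ← two_smul (ZMod 2), show (2 : ZMod 2) = 0 from rfl, zero_smul]
  · simp only [Finset.mem_sigma, Finset.mem_erase] at hp
    exact hp.2.1 (congrArg Sigma.fst h)
  · simp only [Finset.mem_sigma, Finset.mem_erase] at hp ⊢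
    exact ⟨hp.2.2, hp.2.1.symm, hp.1⟩

section Chains

variable {V : Type*}

theorem sum_support_single_one (u : Ch V) : ∑ τ ∈ u.support, Finsupp.single τ 1 = u := by
  conv_rhs => rw [← Finsupp.sum_single u]
  exact Finset.sum_congr rfl fun τ hτ =>
    congrArg _ (Fin.eq_one_of_ne_zero (u τ) (Finsupp.mem_support_iff.mp hτ)).symm

open Function in
theorem PartialMatching.Acyclic.eq_empty_of_forall_exists_covers {m : PartialMatching V}
    (hac : m.Acyclic) {s : Set (Finset V)} (hs : s.Finite) (hsM : s ⊆ Mup m)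
    (hnext : ∀ σ ∈ s, ∃ σ' ∈ s, σ' ≠ σ ∧ Covers σ' (m.μ σ)) : s = ∅ := by
  by_contra hne
  choose! next hnext_mem hnext_ne hnext_covers using hnext
  obtain ⟨x, hxs, hx⟩ :=
    hs.exists_mem_periodicPts hnext_mem (Set.nonempty_iff_ne_empty.mpr hne)
  have hmem (i : ℕ) : next^[i] x ∈ s := Set.MapsTo.iterate hnext_mem i hxs
  have hl : 2 ≤ minimalPeriod next x := by
    have hpos := minimalPeriod_pos_of_mem_periodicPts hx
    have hne1 : minimalPeriod next x ≠ 1 := fun h =>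
      hnext_ne x hxs (minimalPeriod_eq_one_iff_isFixedPt.mp h)
    omega
  refine hac ⟨minimalPeriod next x, fun i => next^[i] x, hl,
    fun i hi j hj h => iterate_injOn_Iio_minimalPeriod hi hj h, fun i _ => hsM (hmem i),
    fun i _ => ?_⟩
  dsimp only
  rw [iterate_mod_minimalPeriod_eq, iterate_succ_apply']
  exact hnext_covers _ (hmem i)

section DecidableEq

variable [DecidableEq V]

theorem covers_iff_exists_erase {σ τ : Finset V} : Covers σ τ ↔ ∃ v ∈ σ, σ.erase v = τ := by
  rw [← Finset.covBy_iff_exists_erase, Finset.covBy_iff_card_sdiff_eq_one]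
  refine ⟨fun ⟨hsub, hcard⟩ => ⟨hsub, ?_⟩, fun ⟨hsub, hcard⟩ => ⟨hsub, ?_⟩⟩ <;>
    have := Finset.card_le_card hsub <;> rw [Finset.card_sdiff_of_subset hsub] at * <;> omega

instance (σ τ : Finset V) : Decidable (Covers σ τ) := inferInstanceAs (Decidable (_ ∧ _))

theorem bdry_single_one (σ : Finset V) :
    bdry V (Finsupp.single σ 1) =
      if σ.card ≤ 1 then 0 else ∑ v ∈ σ, Finsupp.single (σ.erase v) 1 := by
  rw [bdry, Finsupp.linearCombination_single, one_smul]

theorem bdry_bdry_single_one (σ : Finset V) : bdry V (bdry V (Finsupp.single σ 1)) = 0 := by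
  rw [bdry_single_one]
  split_ifs with h₁
  · exact map_zero _
  rw [map_sum]
  by_cases h₂ : σ.card ≤ 2
  · refine Finset.sum_eq_zero fun v hv => ?_
    rw [bdry_single_one, if_pos (by rw [Finset.card_erase_of_mem hv]; omega)]
  calc ∑ v ∈ σ, bdry V (Finsupp.single (σ.erase v) 1)
      = ∑ v ∈ σ, ∑ w ∈ σ.erase v, Finsupp.single ((σ.erase v).erase w) 1 :=
        Finset.sum_congr rfl fun v hv => by
          rw [bdry_single_one, if_neg (by rw [Finset.card_erase_of_mem hv]; omega)]
    _ = 0 := sum_sum_erase_eq_zero_of_symm _ _ fun _ _ => by rw [Finset.erase_right_comm]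

theorem bdry_bdry (f : Ch V) : bdry V (bdry V f) = 0 := by
  suffices bdry V ∘ₗ bdry V = 0 from LinearMap.congr_fun this f
  refine Finsupp.lhom_ext fun σ c => ?_
  rw [← Finsupp.smul_single_one, LinearMap.comp_apply, map_smul, map_smul,
    bdry_bdry_single_one, smul_zero, LinearMap.zero_apply]

theorem bdry_single_one_apply (σ : Finset V) {α : Finset V} (hα : α.Nonempty) :
    bdry V (Finsupp.single σ 1) α = if Covers σ α then 1 else 0 := by
  rw [bdry_single_one]
  split_ifs with h₁ hcov hcov
  · have := hα.card_pos
    have := hcov.2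
    omega
  · rfl
  · obtain ⟨v, hv, rfl⟩ := covers_iff_exists_erase.mp hcov
    rw [Finsupp.finsetSum_apply, Finset.sum_eq_single_of_mem v hv fun w hw hwv =>
      Finsupp.single_eq_of_ne fun h => hwv (σ.erase_injOn hw hv h.symm)]
    exact Finsupp.single_eq_same
  · rw [Finsupp.finsetSum_apply]
    exact Finset.sum_eq_zero fun v hv =>
      Finsupp.single_eq_of_ne fun h => hcov (covers_iff_exists_erase.mpr ⟨v, hv, h.symm⟩)

open Finset in
theorem bdry_apply (u : Ch V) {α : Finset V} (hα : α.Nonempty) :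
    bdry V u α = #{τ ∈ u.support | Covers τ α} := by
  conv_lhs => rw [← sum_support_single_one u]
  rw [map_sum, Finsupp.finsetSum_apply]
  simp only [bdry_single_one_apply _ hα]
  rw [Finset.sum_boole]

open Finset in
theorem exists_ne_covers_of_bdry_eq_zero {u : Ch V} (hu : bdry V u = 0) {σ α : Finset V}
    (hσ : σ ∈ u.support) (hα : α.Nonempty) (hσα : Covers σ α) :
    ∃ σ' ∈ u.support, σ' ≠ σ ∧ Covers σ' α := by
  by_contra! h
  have hfilter : {τ ∈ u.support | Covers τ α} = {σ} :=
    Finset.eq_singleton_iff_unique_mem.mpr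
      ⟨Finset.mem_filter.mpr ⟨hσ, hσα⟩, fun τ hτ => by
        by_contra hne
        exact h τ (Finset.mem_filter.mp hτ).1 hne (Finset.mem_filter.mp hτ).2⟩
  have := bdry_apply u hα
  rw [hu, hfilter, Finset.card_singleton] at this
  exact zero_ne_one this

theorem PartialMatching.Acyclic.eq_zero_of_bdry_eq_zero {m : PartialMatching V}
    (hac : m.Acyclic) {K : Set (Finset V)} (hK : IsComplex K) (hMK : m.M ⊆ K) {u : Ch V}
    (hu : ↑u.support ⊆ Mup m) (hbu : bdry V u = 0) : u = 0 := by
  refine Finsupp.support_eq_empty.mp (Finset.coe_eq_empty.mp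
    (hac.eq_empty_of_forall_exists_covers u.support.finite_toSet hu fun σ hσ => ?_))
  -- the boundary of a vertex is `0`, not `∅`, so `bdry_apply` needs `μ σ ≠ ∅`
  have hμ : (m.μ σ).Nonempty := (hK _ (hMK (m.mem_M σ (hu hσ).1))).1
  exact exists_ne_covers_of_bdry_eq_zero hbu hσ hμ (hu hσ).2

theorem matchW_eq_sup (m : PartialMatching V) (k : ℕ) :
    matchW m k = Finsupp.supported (ZMod 2) (ZMod 2) (MupCard m k) ⊔
      (Finsupp.supported (ZMod 2) (ZMod 2) (MupCard m (k + 1))).map (bdry V) := by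
  rw [matchW, Submodule.span_union, Finsupp.supported_eq_span_single,
    Finsupp.supported_eq_span_single, Submodule.map_span, Set.image_image]
  congr 2 <;> ext f <;> exact exists_congr fun _ => and_congr_right' eq_comm

theorem subsingleton_homolOf_iff (W : ℕ → Submodule (ZMod 2) (Ch V)) (k : ℕ) :
    Subsingleton (homolOf W k) ↔ cyclesOf W k ≤ bdriesOf W k := by
  rw [Submodule.Quotient.subsingleton_iff, Submodule.comap_subtype_eq_top]

theorem cyclesOf_matchW_le_bdriesOf {K : Set (Finset V)} (hK : IsComplex K)
    {m : PartialMatching V} (hMK : m.M ⊆ K) (hac : m.Acyclic) (k : ℕ) :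
    cyclesOf (matchW m) k ≤ bdriesOf (matchW m) k := by
  rintro z ⟨hzW, hz⟩
  rw [matchW_eq_sup] at hzW
  obtain ⟨u, hu, _, ⟨w, hw, rfl⟩, rfl⟩ := Submodule.mem_sup.mp hzW
  have hbu : bdry V u = 0 := by
    have hz : bdry V (u + bdry V w) = 0 := hz
    rwa [map_add, bdry_bdry, add_zero] at hz
  have hu0 : u = 0 := hac.eq_zero_of_bdry_eq_zero hK hMK
    (fun σ hσ => ((Finsupp.mem_supported _ _).mp hu hσ).1) hbu
  rw [hu0, zero_add]
  exact Submodule.mem_map_of_mem (by rw [matchW_eq_sup]; exact Submodule.mem_sup_left hw)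

end DecidableEq

end Chains

theorem matchW_homology_trivial_general {V : Type*} [DecidableEq V]
    (K : Set (Finset V)) (hK : IsComplex K)
    (m : PartialMatching V) (hMK : m.M ⊆ K) (hac : m.Acyclic) :
    ∀ q : ℕ, Subsingleton (homolOf (matchW m) (q + 1)) := fun q =>
  (subsingleton_homolOf_iff _ _).mpr (cyclesOf_matchW_le_bdriesOf hK hMK hac (q + 1))

/-- For a finite simplicial complex `K` with an acyclic partial matching
`μ`, the chain complex `Match_*(K, μ)` is acyclic: its homology vanishes in every
degree `q ≥ 0`. -/
theorem matchW_homology_trivial {V : Type*} [Fintype V] [DecidableEq V]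
    (K : Set (Finset V)) (hK : IsComplex K)
    (m : PartialMatching V) (hMK : m.M ⊆ K) (hac : m.Acyclic) :
    ∀ q : ℕ, Subsingleton (homolOf (matchW m) (q + 1)) :=
  matchW_homology_trivial_general K hK m hMK hac
end
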